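/- Let X be finite, P₀, P₁ distinct distributions in P_ε (so each coordinate ≥ ε > 0), and α, β > 0 with αβ ≥ 1. Suppose λ(P,Q) = D_{β/(1+β)}(Q‖P) (Rényi divergence of order β/(1+β), expressed as min_V { β·D(V‖Q) + D(V‖P) }). If Q₀, Q₁ ∈ P(X) satisfy α·D(Q₀‖P₀) + β·D(Q₁‖P₁) < D_{α/(1+α)}(P₀‖P₁), then for every P₁' ∈ P_ε with P₁' ≠ P₁, α·D(Q₀‖P₁) + β·D(Q₁‖P₁') ≥ D_{β/(1+β)}(P₁'‖P₁). -/
import Mathlib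

open scoped BigOperators ENNReal

/-- KL divergence (base-2 logarithms) between finitely supported distributions. -/
noncomputable def KL {X : Type*} [Fintype X] (P Q : X → ℝ) : ℝ :=
  ∑ x, P x * Real.logb 2 (P x / Q x)

/-- `P` is a probability distribution on the finite alphabet `X`. -/
def IsProb {X : Type*} [Fintype X] (P : X → ℝ) : Prop :=
  (∀ x, 0 ≤ P x) ∧ ∑ x, P x = 1

lemma isProb_le_one {X : Type*} [Fintype X] {P : X → ℝ} (hP : IsProb P) (x : X) :
    P x ≤ 1 := by
  rw [← hP.2]
  exact Finset.single_le_sum (fun i _ => hP.1 i) (Finset.mem_univ x)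

/-- Each term of KL is bounded below by `-1 / log 2`. -/
lemma KL_term_lb {X : Type*} [Fintype X] {ε : ℝ} (hε : 0 < ε) {V P : X → ℝ}
    (hV : IsProb V) (hP : IsProb P) (hPε : ∀ x, ε ≤ P x) (x : X) :
    (-1) / Real.log 2 ≤ V x * Real.logb 2 (V x / P x) := by
  have hlog2 : 0 < Real.log 2 := Real.log_pos (by norm_num)
  have hPx : 0 < P x := lt_of_lt_of_le hε (hPε x)
  rcases eq_or_lt_of_le (hV.1 x) with h0 | h0
  · rw [← h0]; simp
    exact div_nonpos_of_nonpos_of_nonneg (by norm_num) hlog2.le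
  · have hVx : 0 < V x := h0
    rw [Real.logb, ← mul_div_assoc, div_le_div_iff_of_pos_right hlog2]
    have hlog : Real.log (V x / P x) = Real.log (V x) - Real.log (P x) :=
      Real.log_div (ne_of_gt hVx) (ne_of_gt hPx)
    rw [hlog, mul_sub]
    have h1 : Real.log (V x)⁻¹ ≤ (V x)⁻¹ - 1 :=
      Real.log_le_sub_one_of_pos (by positivity)
    rw [Real.log_inv] at h1
    have h2 : V x - 1 ≤ V x * Real.log (V x) := by
      have := mul_le_mul_of_nonneg_left h1 (le_of_lt hVx)
      have hne : V x ≠ 0 := ne_of_gt hVx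
      field_simp at this
      nlinarith
    have h3 : Real.log (P x) ≤ 0 := Real.log_nonpos (le_of_lt hPx) (isProb_le_one hP x)
    nlinarith [hV.1 x, isProb_le_one hV x]

lemma KL_lb {X : Type*} [Fintype X] {ε : ℝ} (hε : 0 < ε) {V P : X → ℝ}
    (hV : IsProb V) (hP : IsProb P) (hPε : ∀ x, ε ≤ P x) :
    (Fintype.card X : ℝ) * ((-1) / Real.log 2) ≤ KL V P := by
  rw [KL, ← Finset.card_univ, ← nsmul_eq_mul, ← Finset.sum_const]
  exact Finset.sum_le_sum (fun x _ => KL_term_lb hε hV hP hPε x)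

/-- Gibbs' inequality. -/
lemma KL_nonneg {X : Type*} [Fintype X] {ε : ℝ} (hε : 0 < ε) {V P : X → ℝ}
    (hV : IsProb V) (hP : IsProb P) (hPε : ∀ x, ε ≤ P x) :
    0 ≤ KL V P := by
  have hlog2 : 0 < Real.log 2 := Real.log_pos (by norm_num)
  have key : ∑ x, V x * Real.log (V x / P x) ≥ 0 := by
    have h : ∀ x : X, V x * Real.log (P x / V x) ≤ P x - V x := by
      intro x
      have hPx : 0 < P x := lt_of_lt_of_le hε (hPε x)
      rcases eq_or_lt_of_le (hV.1 x) with h0 | h0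
      · rw [← h0]; simpa using le_of_lt hPx
      · have h1 : Real.log (P x / V x) ≤ P x / V x - 1 :=
          Real.log_le_sub_one_of_pos (by positivity)
        have := mul_le_mul_of_nonneg_left h1 (le_of_lt h0)
        have hne : V x ≠ 0 := ne_of_gt h0
        calc V x * Real.log (P x / V x) ≤ V x * (P x / V x - 1) := this
          _ = P x - V x := by field_simp
    have hsum : ∑ x, V x * Real.log (P x / V x) ≤ 0 := by
      calc ∑ x, V x * Real.log (P x / V x) ≤ ∑ x, (P x - V x) :=
            Finset.sum_le_sum (fun x _ => h x)
        _ = 0 := by rw [Finset.sum_sub_distrib, hV.2, hP.2]; ring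
    have heq : ∀ x : X, V x * Real.log (V x / P x) = -(V x * Real.log (P x / V x)) := by
      intro x
      have hPx : 0 < P x := lt_of_lt_of_le hε (hPε x)
      rcases eq_or_lt_of_le (hV.1 x) with h0 | h0
      · rw [← h0]; ring
      · have hli : Real.log (P x / V x) = - Real.log (V x / P x) := by
          rw [← Real.log_inv, inv_div]
        rw [hli]; ring
    simp_rw [heq]
    rw [Finset.sum_neg_distrib]
    linarith
  have : KL V P = (∑ x, V x * Real.log (V x / P x)) / Real.log 2 := by
    rw [KL, Finset.sum_div]
    congr 1; ext x
    rw [Real.logb, mul_div_assoc]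
  rw [this]
  positivity

/-- Key inequality for `μ ≥ Rényi` when `αβ ≥ 1`: if
`α·D(Q₀‖P₀) + β·D(Q₁‖P₁) < D_{α/(1+α)}(P₀‖P₁)` then for every
`P₁' ∈ P_ε \ {P₁}`, `α·D(Q₀‖P₁) + β·D(Q₁‖P₁') ≥ D_{β/(1+β)}(P₁'‖P₁)`. -/
theorem stmt14 {X : Type*} [Fintype X] (ε α β : ℝ)
    (hε : 0 < ε) (hα : 0 < α) (hβ : 0 < β) (hαβ : 1 ≤ α * β)
    (P₀ P₁ : X → ℝ) (hP₀ : IsProb P₀) (hP₁ : IsProb P₁)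
    (hP₀ε : ∀ x, ε ≤ P₀ x) (hP₁ε : ∀ x, ε ≤ P₁ x) (hne : P₀ ≠ P₁)
    (Q₀ Q₁ : X → ℝ) (hQ₀ : IsProb Q₀) (hQ₁ : IsProb Q₁)
    (hlt : α * KL Q₀ P₀ + β * KL Q₁ P₁ <
      sInf {v | ∃ V : X → ℝ, IsProb V ∧ v = α * KL V P₀ + KL V P₁}) :
    ∀ P₁' : X → ℝ, IsProb P₁' → (∀ x, ε ≤ P₁' x) → P₁' ≠ P₁ →
      sInf {v | ∃ V : X → ℝ, IsProb V ∧ v = β * KL V P₁' + KL V P₁}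
        ≤ α * KL Q₀ P₁ + β * KL Q₁ P₁' := by
  intro P₁' hP₁' hP₁'ε hP₁'ne
  set c : ℝ := (Fintype.card X : ℝ) * ((-1) / Real.log 2) with hc
  -- bddBelow of set₁
  have hbdd1 : BddBelow {v | ∃ V : X → ℝ, IsProb V ∧ v = α * KL V P₀ + KL V P₁} := by
    refine ⟨α * c + c, ?_⟩
    rintro v ⟨V, hV, rfl⟩
    have h1 := KL_lb hε hV hP₀ hP₀ε
    have h2 := KL_lb hε hV hP₁ hP₁ε
    have := mul_le_mul_of_nonneg_left h1 (le_of_lt hα)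
    exact add_le_add this h2
  have hbdd2 : BddBelow {v | ∃ V : X → ℝ, IsProb V ∧ v = β * KL V P₁' + KL V P₁} := by
    refine ⟨β * c + c, ?_⟩
    rintro v ⟨V, hV, rfl⟩
    have h1 := KL_lb hε hV hP₁' hP₁'ε
    have h2 := KL_lb hε hV hP₁ hP₁ε
    have := mul_le_mul_of_nonneg_left h1 (le_of_lt hβ)
    exact add_le_add this h2
  -- sInf₁ ≤ α KL Q₀ P₀ + KL Q₀ P₁
  have h1 : sInf {v | ∃ V : X → ℝ, IsProb V ∧ v = α * KL V P₀ + KL V P₁}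
      ≤ α * KL Q₀ P₀ + KL Q₀ P₁ :=
    csInf_le hbdd1 ⟨Q₀, hQ₀, rfl⟩
  have hkey : β * KL Q₁ P₁ < KL Q₀ P₁ := by linarith
  have h0 : 0 ≤ KL Q₀ P₁ := KL_nonneg hε hQ₀ hP₁ hP₁ε
  have h2 : KL Q₁ P₁ ≤ α * KL Q₀ P₁ := by nlinarith
  have h3 : sInf {v | ∃ V : X → ℝ, IsProb V ∧ v = β * KL V P₁' + KL V P₁}
      ≤ β * KL Q₁ P₁' + KL Q₁ P₁ :=
    csInf_le hbdd2 ⟨Q₁, hQ₁, rfl⟩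
  linarith
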